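/- arXiv:0805.2277 — 3 statements merged into one kernel-verified Lean document; each statement's English description precedes it below -/
import Mathlib

section
/- Let t₁, t₂ ∈ ℂ with t₁ ≠ t₂, tᵢ³ ≠ −1 and 2tᵢ³ ≠ 1 for i = 1, 2. There exist a, b, c ∈ ℂ such that the section s(x) = ax² + bx + c is tangent to the curve B̄₁ at both parameters t₁ and t₂ — i.e., the function p(t) = s(x(t)) − y(t) satisfies p(tᵢ) = 0 and p′(tᵢ) = 0 for i = 1, 2 — if and only if 2(t₁ + t₂)³ = −1. Moreover, when this condition holds, the triple (a, b, c) is uniquely determined by (t₁, t₂). -/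
open Complex

/-- The parametrization `x(t) = t/(t³+1)` of the trigonal curve `B̄₁`. -/
noncomputable def xPar (t : ℂ) : ℂ := t / (t ^ 3 + 1)

/-- The parametrization `y(t) = 1/(t³+1)²` of the trigonal curve `B̄₁`. -/
noncomputable def yPar (t : ℂ) : ℂ := 1 / (t ^ 3 + 1) ^ 2

/-- `p(t) = s(x(t)) - y(t)` for the section `s(x) = ax² + bx + c`. -/
noncomputable def pFun (a b c : ℂ) : ℂ → ℂ :=
  fun t => a * xPar t ^ 2 + b * xPar t + c - yPar t

/-- The section `y = ax² + bx + c` is tangent to `B̄₁` at the parameter `t`: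
`p(t) = 0` and `p'(t) = 0`. -/
def TangentAt (a b c t : ℂ) : Prop :=
  pFun a b c t = 0 ∧ deriv (pFun a b c) t = 0

lemma pFun_eq (a b c t : ℂ) (hd : t ^ 3 + 1 ≠ 0) :
    pFun a b c t =
      (a * t ^ 2 + b * t * (t ^ 3 + 1) + c * (t ^ 3 + 1) ^ 2 - 1) / (t ^ 3 + 1) ^ 2 := by
  unfold pFun xPar yPar
  field_simp

lemma hasDerivAt_pFun (a b c t : ℂ) (hd : t ^ 3 + 1 ≠ 0) :
    HasDerivAt (pFun a b c)
      (((1 - 2 * t ^ 3) * (2 * a * t + b * (t ^ 3 + 1)) + 6 * t ^ 2) / (t ^ 3 + 1) ^ 3) t := by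
  have hden : HasDerivAt (fun t : ℂ => t ^ 3 + 1) (3 * t ^ 2) t := by
    simpa using (hasDerivAt_pow 3 t).add_const 1
  have hx : HasDerivAt xPar ((1 - 2 * t ^ 3) / (t ^ 3 + 1) ^ 2) t := by
    have h := (hasDerivAt_id t).div hden hd
    have : (1 * (t ^ 3 + 1) - t * (3 * t ^ 2)) / (t ^ 3 + 1) ^ 2
        = (1 - 2 * t ^ 3) / (t ^ 3 + 1) ^ 2 := by ring_nf
    exact this ▸ h
  have hy : HasDerivAt yPar (-(6 * t ^ 2) / (t ^ 3 + 1) ^ 3) t := by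
    have hden2 : HasDerivAt (fun t : ℂ => (t ^ 3 + 1) ^ 2) (2 * (t ^ 3 + 1) ^ 1 * (3 * t ^ 2)) t :=
      hden.pow 2
    have h := (hasDerivAt_const t (1 : ℂ)).div hden2 (pow_ne_zero 2 hd)
    have heq : (0 * (t ^ 3 + 1) ^ 2 - 1 * (2 * (t ^ 3 + 1) ^ 1 * (3 * t ^ 2))) / ((t ^ 3 + 1) ^ 2) ^ 2
        = -(6 * t ^ 2) / (t ^ 3 + 1) ^ 3 := by
      rw [div_eq_div_iff (pow_ne_zero 2 (pow_ne_zero 2 hd)) (pow_ne_zero 3 hd)]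
      ring
    exact heq ▸ h
  have h := ((((hx.pow 2).const_mul a).add (hx.const_mul b)).add_const c).sub hy
  have heq : a * (↑2 * xPar t ^ (2 - 1) * ((1 - 2 * t ^ 3) / (t ^ 3 + 1) ^ 2))
        + b * ((1 - 2 * t ^ 3) / (t ^ 3 + 1) ^ 2) - -(6 * t ^ 2) / (t ^ 3 + 1) ^ 3
      = ((1 - 2 * t ^ 3) * (2 * a * t + b * (t ^ 3 + 1)) + 6 * t ^ 2) / (t ^ 3 + 1) ^ 3 := by
    unfold xPar
    rw [show (2:ℕ) - 1 = 1 from rfl, pow_one]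
    field_simp [hd]
    ring
  exact heq ▸ h

lemma tangent_iff (a b c t : ℂ) (hd : t ^ 3 + 1 ≠ 0) :
    TangentAt a b c t ↔
      (a * t ^ 2 + b * t * (t ^ 3 + 1) + c * (t ^ 3 + 1) ^ 2 = 1 ∧
       (1 - 2 * t ^ 3) * (2 * a * t + b * (t ^ 3 + 1)) + 6 * t ^ 2 = 0) := by
  unfold TangentAt
  rw [pFun_eq a b c t hd, (hasDerivAt_pFun a b c t hd).deriv, div_eq_zero_iff, div_eq_zero_iff]
  simp [pow_ne_zero _ hd, sub_eq_zero]


/-- There is a section `y = ax² + bx + c` tangent to `B̄₁` at two distinct parameters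
`t₁ ≠ t₂` (with `tᵢ³ ≠ -1`, `2tᵢ³ ≠ 1`) if and only if `2(t₁+t₂)³ = -1`;
moreover such a section is unique. -/
theorem stmt4 (t₁ t₂ : ℂ) (hne : t₁ ≠ t₂)
    (h₁ : t₁ ^ 3 ≠ -1) (h₂ : t₂ ^ 3 ≠ -1)
    (h₃ : 2 * t₁ ^ 3 ≠ 1) (h₄ : 2 * t₂ ^ 3 ≠ 1) :
    ((∃ a b c : ℂ, TangentAt a b c t₁ ∧ TangentAt a b c t₂) ↔
      2 * (t₁ + t₂) ^ 3 = -1) ∧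
    (2 * (t₁ + t₂) ^ 3 = -1 →
      ∀ a b c a' b' c' : ℂ,
        TangentAt a b c t₁ → TangentAt a b c t₂ →
        TangentAt a' b' c' t₁ → TangentAt a' b' c' t₂ →
        a = a' ∧ b = b' ∧ c = c') := by
  have hd1 : t₁ ^ 3 + 1 ≠ 0 := fun h => h₁ (by linear_combination h)
  have hd2 : t₂ ^ 3 + 1 ≠ 0 := fun h => h₂ (by linear_combination h)
  have he1 : (1 : ℂ) - 2 * t₁ ^ 3 ≠ 0 := fun h => h₃ (by linear_combination -h)
  have he2 : (1 : ℂ) - 2 * t₂ ^ 3 ≠ 0 := fun h => h₄ (by linear_combination -h)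
  have hsu : t₁ - t₂ ≠ 0 := sub_ne_zero.mpr hne
  -- the condition implies the auxiliary determinant factor is nonzero
  have hDne : 2 * (t₁ + t₂) ^ 3 = -1 → (1 : ℂ) - t₁ * t₂ * (t₁ + t₂) ≠ 0 := by
    intro hcond hD
    have hD' : t₁ * t₂ * (t₁ + t₂) = 1 := by linear_combination -hD
    have hz : (2 * t₁ ^ 3 - 1) * (2 * t₂ ^ 3 - 1) = 0 := by
      linear_combination (-8 * ((t₁ * t₂ * (t₁ + t₂)) ^ 2 + t₁ * t₂ * (t₁ + t₂) + 1) + 6) * hD'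
        + (4 * (t₁ * t₂) ^ 3 - 1) * hcond
    rcases mul_eq_zero.mp hz with h | h
    · exact h₃ (by linear_combination h)
    · exact h₄ (by linear_combination h)
  constructor
  · constructor
    · -- forward
      rintro ⟨a, b, c, ht1, ht2⟩
      obtain ⟨hHs, hGs⟩ := (tangent_iff a b c t₁ hd1).mp ht1
      obtain ⟨hHu, hGu⟩ := (tangent_iff a b c t₂ hd2).mp ht2
      by_cases hD : t₁ * t₂ * (t₁ + t₂) = 1
      · exfalso
        have key : 6 * t₁ * t₂ * (t₁ - t₂) * (1 + 2 * t₁ * t₂ * (t₁ + t₂)) = 0 := by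
          linear_combination t₂ * (1 - 2 * t₂ ^ 3) * hGs - t₁ * (1 - 2 * t₁ ^ 3) * hGu
            - (b * (t₁ - t₂) * (2 * t₁ ^ 3 - 1) * (2 * t₂ ^ 3 - 1)) * hD
        have key2 : t₁ * t₂ * (t₁ - t₂) = 0 := by
          linear_combination (1 / 18 : ℂ) * key - (2 / 3 : ℂ) * (t₁ * t₂ * (t₁ - t₂)) * hD
        rcases mul_eq_zero.mp key2 with h | h
        · exact one_ne_zero (by linear_combination (t₁ + t₂) * h - hD : (1 : ℂ) = 0)
        · exact hsu h
      · have key : 2 * (2 * (t₁ + t₂) ^ 3 + 1) *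
            ((t₁ - t₂) ^ 4 * ((t₁ ^ 3 + 1) * ((t₂ ^ 3 + 1) * (1 - t₁ * t₂ * (t₁ + t₂))))) = 0 := by
          linear_combination
            (2 * (1 - 2 * t₁ ^ 3) * (1 - 2 * t₂ ^ 3) * (t₁ - t₂) * (1 - t₁ * t₂ * (t₁ + t₂))
              * (t₁ ^ 3 + 1) ^ 2) * hHu
            - (2 * (1 - 2 * t₁ ^ 3) * (1 - 2 * t₂ ^ 3) * (t₁ - t₂) * (1 - t₁ * t₂ * (t₁ + t₂))
              * (t₂ ^ 3 + 1) ^ 2) * hHs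
            + ((t₁ ^ 2 * (t₂ ^ 3 + 1) ^ 2 - t₂ ^ 2 * (t₁ ^ 3 + 1) ^ 2) * ((1 - 2 * t₂ ^ 3) * (t₂ ^ 3 + 1))
              + (t₁ * (t₁ ^ 3 + 1) * (t₂ ^ 3 + 1) ^ 2 - t₂ * (t₂ ^ 3 + 1) * (t₁ ^ 3 + 1) ^ 2)
                * (-2 * t₂ * (1 - 2 * t₂ ^ 3))) * hGs
            + ((t₁ ^ 2 * (t₂ ^ 3 + 1) ^ 2 - t₂ ^ 2 * (t₁ ^ 3 + 1) ^ 2) * (-(1 - 2 * t₁ ^ 3) * (t₁ ^ 3 + 1))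
              + (t₁ * (t₁ ^ 3 + 1) * (t₂ ^ 3 + 1) ^ 2 - t₂ * (t₂ ^ 3 + 1) * (t₁ ^ 3 + 1) ^ 2)
                * (2 * t₁ * (1 - 2 * t₁ ^ 3))) * hGu
        have hD' : (1 : ℂ) - t₁ * t₂ * (t₁ + t₂) ≠ 0 := fun h => hD (by linear_combination -h)
        have h2 : (2 : ℂ) * (2 * (t₁ + t₂) ^ 3 + 1) = 0 := by
          rcases mul_eq_zero.mp key with h | h
          · exact h
          · exact absurd h (by
              exact mul_ne_zero (pow_ne_zero 4 hsu) (mul_ne_zero hd1 (mul_ne_zero hd2 hD')))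
        linear_combination (1 / 2 : ℂ) * h2
    · -- backward: construct the section
      intro hcond
      have hD' : (1 : ℂ) - t₁ * t₂ * (t₁ + t₂) ≠ 0 := hDne hcond
      set den : ℂ := 2 * (1 - 2 * t₁ ^ 3) * (1 - 2 * t₂ ^ 3) * (t₁ - t₂) * (1 - t₁ * t₂ * (t₁ + t₂)) with hden
      have hdenne : den ≠ 0 :=
        mul_ne_zero (mul_ne_zero (mul_ne_zero (mul_ne_zero two_ne_zero he1) he2) hsu) hD'
      set aN : ℂ := 6 * (t₂ ^ 2 * (1 - 2 * t₁ ^ 3) * (t₁ ^ 3 + 1) - t₁ ^ 2 * (1 - 2 * t₂ ^ 3) * (t₂ ^ 3 + 1)) with haN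
      set bN : ℂ := 12 * t₁ * t₂ * (t₁ * (1 - 2 * t₂ ^ 3) - t₂ * (1 - 2 * t₁ ^ 3)) with hbN
      set cN : ℂ := den - aN * t₁ ^ 2 - bN * t₁ * (t₁ ^ 3 + 1) with hcN
      refine ⟨aN / den, bN / den, cN / (den * (t₁ ^ 3 + 1) ^ 2), ?_, ?_⟩
      · rw [tangent_iff _ _ _ _ hd1]
        constructor
        · field_simp
          ring
        · field_simp
          ring
      · rw [tangent_iff _ _ _ _ hd2]
        constructor
        · have hKey : aN * t₂ ^ 2 * (t₁ ^ 3 + 1) ^ 2 + bN * (t₂ * (t₂ ^ 3 + 1)) * (t₁ ^ 3 + 1) ^ 2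
              + cN * (t₂ ^ 3 + 1) ^ 2 = den * (t₁ ^ 3 + 1) ^ 2 := by
            rw [haN, hbN, hcN, hden]
            linear_combination (2 * (t₁ - t₂) ^ 4 * (t₁ ^ 3 + 1) * (t₂ ^ 3 + 1)
              * (1 - t₁ * t₂ * (t₁ + t₂))) * hcond
          have expand : aN / den * t₂ ^ 2 + bN / den * t₂ * (t₂ ^ 3 + 1)
              + cN / (den * (t₁ ^ 3 + 1) ^ 2) * (t₂ ^ 3 + 1) ^ 2
              = (aN * t₂ ^ 2 * (t₁ ^ 3 + 1) ^ 2 + bN * (t₂ * (t₂ ^ 3 + 1)) * (t₁ ^ 3 + 1) ^ 2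
                + cN * (t₂ ^ 3 + 1) ^ 2) / (den * (t₁ ^ 3 + 1) ^ 2) := by
            field_simp
          rw [expand, hKey, div_self (mul_ne_zero hdenne (pow_ne_zero 2 hd1))]
        · field_simp
          ring
  · -- uniqueness
    intro hcond a b c a' b' c' ht1 ht2 ht1' ht2'
    have hD' : (1 : ℂ) - t₁ * t₂ * (t₁ + t₂) ≠ 0 := hDne hcond
    obtain ⟨hHs, hGs⟩ := (tangent_iff a b c t₁ hd1).mp ht1
    obtain ⟨hHu, hGu⟩ := (tangent_iff a b c t₂ hd2).mp ht2
    obtain ⟨hHs', hGs'⟩ := (tangent_iff a' b' c' t₁ hd1).mp ht1'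
    obtain ⟨hHu', hGu'⟩ := (tangent_iff a' b' c' t₂ hd2).mp ht2'
    have hdenne : (2 : ℂ) * (1 - 2 * t₁ ^ 3) * (1 - 2 * t₂ ^ 3) * (t₁ - t₂) * (1 - t₁ * t₂ * (t₁ + t₂)) ≠ 0 :=
      mul_ne_zero (mul_ne_zero (mul_ne_zero (mul_ne_zero two_ne_zero he1) he2) hsu) hD'
    have hA : 2 * (1 - 2 * t₁ ^ 3) * (1 - 2 * t₂ ^ 3) * (t₁ - t₂) * (1 - t₁ * t₂ * (t₁ + t₂)) * (a - a') = 0 := by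
      linear_combination (1 - 2 * t₂ ^ 3) * (t₂ ^ 3 + 1) * hGs - (1 - 2 * t₁ ^ 3) * (t₁ ^ 3 + 1) * hGu
        - (1 - 2 * t₂ ^ 3) * (t₂ ^ 3 + 1) * hGs' + (1 - 2 * t₁ ^ 3) * (t₁ ^ 3 + 1) * hGu'
    have hB : 2 * (1 - 2 * t₁ ^ 3) * (1 - 2 * t₂ ^ 3) * (t₁ - t₂) * (1 - t₁ * t₂ * (t₁ + t₂)) * (b - b') = 0 := by
      linear_combination (-2 * t₂ * (1 - 2 * t₂ ^ 3)) * hGs + (2 * t₁ * (1 - 2 * t₁ ^ 3)) * hGu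
        + (2 * t₂ * (1 - 2 * t₂ ^ 3)) * hGs' - (2 * t₁ * (1 - 2 * t₁ ^ 3)) * hGu'
    have ha : a = a' := by
      have := (mul_eq_zero.mp hA).resolve_left hdenne
      linear_combination this
    have hb : b = b' := by
      have := (mul_eq_zero.mp hB).resolve_left hdenne
      linear_combination this
    refine ⟨ha, hb, ?_⟩
    have hC : (t₁ ^ 3 + 1) ^ 2 * (c - c') = 0 := by
      linear_combination hHs - hHs' - t₁ ^ 2 * ha - t₁ * (t₁ ^ 3 + 1) * hb
    have := (mul_eq_zero.mp hC).resolve_left (pow_ne_zero 2 hd1)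
    linear_combination this
end

section
/- Let t ∈ ℂ with t³ ≠ −1 and 2t³ ≠ 1, and let a, b, c ∈ ℂ. The section s(x) = ax² + bx + c is tangent to the curve B̄₁ at the parameter t — i.e., p(t) = 0 and p′(t) = 0 for p(t) = s(x(t)) − y(t) — if and only if b = −(2t(2t³−1)a − 6t²)/((2t³−1)(t³+1)) and c = (t²(2t³−1)a − (4t³+1))/((2t³−1)(t³+1)²). -/
open Complex

lemma hasDerivAt_xPar (t : ℂ) (hD : t ^ 3 + 1 ≠ 0) :
    HasDerivAt xPar ((1 - 2 * t ^ 3) / (t ^ 3 + 1) ^ 2) t := by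
  have h1 : HasDerivAt (fun s : ℂ => s) 1 t := hasDerivAt_id t
  have h2 : HasDerivAt (fun s : ℂ => s ^ 3 + 1) (3 * t ^ 2) t := by
    simpa using (hasDerivAt_pow 3 t).add_const 1
  have := h1.div h2 hD
  exact this.congr_deriv (by rw [div_left_inj' (pow_ne_zero 2 hD)]; ring)

lemma hasDerivAt_yPar (t : ℂ) (hD : t ^ 3 + 1 ≠ 0) :
    HasDerivAt yPar (-6 * t ^ 2 / (t ^ 3 + 1) ^ 3) t := by
  have h1 : HasDerivAt (fun _ : ℂ => (1 : ℂ)) 0 t := hasDerivAt_const t 1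
  have h2 : HasDerivAt (fun s : ℂ => (s ^ 3 + 1) ^ 2)
      (2 * (t ^ 3 + 1) ^ 1 * (3 * t ^ 2)) t := by
    have h3 : HasDerivAt (fun s : ℂ => s ^ 3 + 1) (3 * t ^ 2) t := by
      simpa using (hasDerivAt_pow 3 t).add_const 1
    exact h3.pow 2
  have := h1.div h2 (pow_ne_zero 2 hD)
  exact this.congr_deriv (by
    rw [div_eq_div_iff (pow_ne_zero 2 (pow_ne_zero 2 hD)) (pow_ne_zero 3 hD)]; ring)

/-- The section `y = ax² + bx + c` is tangent to `B̄₁` at the parameter `t`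
(with `t³ ≠ -1`, `2t³ ≠ 1`) if and only if `b` and `c` are given by the stated
rational expressions in `t` and `a`. -/
theorem stmt5 (t a b c : ℂ) (h₁ : t ^ 3 ≠ -1) (h₂ : 2 * t ^ 3 ≠ 1) :
    TangentAt a b c t ↔
      (b = -(2 * t * (2 * t ^ 3 - 1) * a - 6 * t ^ 2) /
            ((2 * t ^ 3 - 1) * (t ^ 3 + 1)) ∧
       c = (t ^ 2 * (2 * t ^ 3 - 1) * a - (4 * t ^ 3 + 1)) /
            ((2 * t ^ 3 - 1) * (t ^ 3 + 1) ^ 2)) := by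
  have hD : t ^ 3 + 1 ≠ 0 := fun h => h₁ (by linear_combination h)
  have hE : 2 * t ^ 3 - 1 ≠ 0 := fun h => h₂ (by linear_combination h)
  have hx := hasDerivAt_xPar t hD
  have hy := hasDerivAt_yPar t hD
  have hp : HasDerivAt (pFun a b c)
      (a * (2 * xPar t ^ 1 * ((1 - 2 * t ^ 3) / (t ^ 3 + 1) ^ 2))
        + b * ((1 - 2 * t ^ 3) / (t ^ 3 + 1) ^ 2)
        - (-6 * t ^ 2 / (t ^ 3 + 1) ^ 3)) t := by
    exact ((((hx.pow 2).const_mul a).add ((hx.const_mul b))).add_const c).sub hy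
  rw [TangentAt, hp.deriv]
  simp only [pFun, xPar, yPar]
  rw [eq_div_iff (mul_ne_zero hE hD), eq_div_iff (mul_ne_zero hE (pow_ne_zero 2 hD))]
  constructor
  · rintro ⟨e1, e2⟩
    field_simp at e1 e2
    have E1 : a * t ^ 2 + b * t * (t ^ 3 + 1) + c * (t ^ 3 + 1) ^ 2 - 1 = 0 := by
      have h3 : (a * t ^ 2 + b * t * (t ^ 3 + 1) + c * (t ^ 3 + 1) ^ 2 - 1)
          * (t ^ 3 + 1) ^ 3 = 0 := by linear_combination (t ^ 3 + 1) ^ 3 * e1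
      exact (mul_eq_zero.mp h3).resolve_right (pow_ne_zero 3 hD)
    have E2 : (1 - 2 * t ^ 3) * (2 * a * t + b * (t ^ 3 + 1)) + 6 * t ^ 2 = 0 := by
      have h3 : ((1 - 2 * t ^ 3) * (2 * a * t + b * (t ^ 3 + 1)) + 6 * t ^ 2)
          * (t ^ 3 + 1) ^ 5 = 0 := by linear_combination (t ^ 3 + 1) ^ 5 * e2
      exact (mul_eq_zero.mp h3).resolve_right (pow_ne_zero 5 hD)
    constructor
    · linear_combination -E2
    · linear_combination (2 * t ^ 3 - 1) * E1 + t * E2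
  · rintro ⟨hb', hc'⟩
    have P1 : a * t ^ 2 + b * t * (t ^ 3 + 1) + c * (t ^ 3 + 1) ^ 2 - 1 = 0 := by
      have h3 : (a * t ^ 2 + b * t * (t ^ 3 + 1) + c * (t ^ 3 + 1) ^ 2 - 1)
          * (2 * t ^ 3 - 1) = 0 := by linear_combination t * hb' + hc'
      exact (mul_eq_zero.mp h3).resolve_right hE
    have P2 : (1 - 2 * t ^ 3) * (2 * a * t + b * (t ^ 3 + 1)) + 6 * t ^ 2 = 0 := by
      linear_combination -hb'
    constructor
    · field_simp
      linear_combination P1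
    · field_simp
      linear_combination P2
end

section
/- Let G be the presented group on generators α, α′, β, β′, γ, γ′ with the relations R₄ together with the additional braid relation αβα = βαβ. Then the homomorphism G → B̄₃ sending α, α′ to σ₁ and β, β′, γ, γ′ to σ₂ is well defined and is an isomorphism. -/
/-- The relations of the reduced braid group `B̄₃`:
`σ₁σ₂σ₁ = σ₂σ₁σ₂` and `(σ₁σ₂)³ = 1`. -/
def bbar3Rels : Set (FreeGroup (Fin 2)) :=
  { FreeGroup.of 0 * FreeGroup.of 1 * FreeGroup.of 0 *
      (FreeGroup.of 1 * FreeGroup.of 0 * FreeGroup.of 1)⁻¹,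
    (FreeGroup.of 0 * FreeGroup.of 1) ^ 3 }

/-- The reduced braid group `B̄₃ = ⟨σ₁, σ₂ ∣ σ₁σ₂σ₁ = σ₂σ₁σ₂, (σ₁σ₂)³ = 1⟩`. -/
abbrev Bbar3 : Type := PresentedGroup bbar3Rels

/-- The generator `σ₁` of `B̄₃`. -/
def σ1 : Bbar3 := PresentedGroup.of 0

/-- The generator `σ₂` of `B̄₃`. -/
def σ2 : Bbar3 := PresentedGroup.of 1

namespace Stmt

def a : FreeGroup (Fin 6) := FreeGroup.of 0
def a' : FreeGroup (Fin 6) := FreeGroup.of 1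
def b : FreeGroup (Fin 6) := FreeGroup.of 2
def b' : FreeGroup (Fin 6) := FreeGroup.of 3
def c : FreeGroup (Fin 6) := FreeGroup.of 4
def c' : FreeGroup (Fin 6) := FreeGroup.of 5

/-- The set of relators. -/
def rels : Set (FreeGroup (Fin 6)) :=
  { (a * b) ^ 3 * (b' * a' * b' * a * b * a)⁻¹,
    (a' * b') ^ 3 * (b * a * b * a' * b' * a')⁻¹,
    a * b * (a' * b')⁻¹,
    ((b * a * b)⁻¹ * a * (b * a * b)) * (c') * ((b * a * b)⁻¹ * a * (b * a * b))⁻¹ * (c')⁻¹,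
    ((b' * a' * b')⁻¹ * a' * (b' * a' * b')) * (c) * ((b' * a' * b')⁻¹ * a' * (b' * a' * b'))⁻¹ * (c)⁻¹,
    c * c' * c * (c' * c * c')⁻¹,
    b * (c' * c * c'⁻¹)⁻¹,
    b' * (c * c' * c⁻¹)⁻¹,
    (b' * c)⁻¹ * a' * b' * c * ((b * c')⁻¹ * a * b * c')⁻¹,
    a * b * c' * a' * b' * c,
    a * b * a * (b * a * b)⁻¹ }

end Stmt

section BraidAux

variable {M : Type*} [Group M] {x y : M}

/-- From the braid relation, `(yxy)⁻¹ x (yxy) = y`. -/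
theorem braid_conj (h : x * y * x = y * x * y) :
    (y * x * y)⁻¹ * x * (y * x * y) = y := by
  have h2 : x * (x * y * x) = (x * y * x) * y := by
    have hx := congrArg (fun t => x * t) h
    rw [hx]; group
  calc (y * x * y)⁻¹ * x * (y * x * y)
      = (x * y * x)⁻¹ * (x * (x * y * x)) := by rw [← h]; group
    _ = (x * y * x)⁻¹ * ((x * y * x) * y) := by rw [h2]
    _ = y := by group

theorem braid_cube (h : x * y * x = y * x * y) (h2 : x * y * y * x * y * y = 1) :
    (x * y) ^ 3 = 1 := by
  have e : (x * y) ^ 3 = x * y * (x * y * x) * y := by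
    rw [pow_succ, pow_succ, pow_one]; group
  rw [e, h, show x * y * (y * x * y) * y = x * y * y * x * y * y by group, h2]

theorem braid_cube' (h : x * y * x = y * x * y) (h3 : (x * y) ^ 3 = 1) :
    x * y * y * x * y * y = 1 := by
  have e : x * y * y * x * y * y = x * y * (y * x * y) * y := by group
  rw [e, ← h, show x * y * (x * y * x) * y = (x * y) ^ 3 by
    rw [pow_succ, pow_succ, pow_one]; group, h3]

theorem cube_swap (h : (x * y) ^ 3 = 1) : y * x * y * x * y * x = 1 := by
  have e : y * x * y * x * y * x = y * ((x * y) ^ 3) * y⁻¹ := by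
    rw [pow_succ, pow_succ, pow_one]; group
  rw [e, h]; group

end BraidAux

theorem relG {α : Type*} (rels : Set (FreeGroup α)) {r : FreeGroup α} (hr : r ∈ rels) :
    PresentedGroup.mk rels r = 1 :=
  (QuotientGroup.eq_one_iff r).mpr (Subgroup.subset_normalClosure hr)

namespace Aux

/-- Braid relation in `B̄₃`. -/
theorem sigma_braid : σ1 * σ2 * σ1 = σ2 * σ1 * σ2 := by
  have h := relG bbar3Rels (show FreeGroup.of 0 * FreeGroup.of 1 * FreeGroup.of 0 *
      (FreeGroup.of 1 * FreeGroup.of 0 * FreeGroup.of 1)⁻¹ ∈ bbar3Rels by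
    simp [bbar3Rels])
  simp only [map_mul, map_inv] at h
  exact mul_inv_eq_one.mp h

theorem sigma_cube : (σ1 * σ2) ^ 3 = 1 := by
  have h := relG bbar3Rels (show (FreeGroup.of 0 * FreeGroup.of 1) ^ 3 ∈ bbar3Rels by
    simp [bbar3Rels])
  simp only [map_mul, map_pow] at h
  exact h

abbrev G : Type := PresentedGroup Stmt.rels

def A : G := PresentedGroup.mk Stmt.rels Stmt.a
def A' : G := PresentedGroup.mk Stmt.rels Stmt.a'
def B : G := PresentedGroup.mk Stmt.rels Stmt.b
def B' : G := PresentedGroup.mk Stmt.rels Stmt.b'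
def X : G := PresentedGroup.mk Stmt.rels Stmt.c
def Y : G := PresentedGroup.mk Stmt.rels Stmt.c'

/-- r11: the braid relation in `G`. -/
theorem hbr : A * B * A = B * A * B := by
  have h := relG Stmt.rels (show Stmt.a * Stmt.b * Stmt.a * (Stmt.b * Stmt.a * Stmt.b)⁻¹
      ∈ Stmt.rels by simp [Stmt.rels])
  simp only [map_mul, map_inv] at h
  exact mul_inv_eq_one.mp h

/-- r1. -/
theorem h1 : (A * B) ^ 3 = B' * A' * B' * A * B * A := by
  have h := relG Stmt.rels (show (Stmt.a * Stmt.b) ^ 3 *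
      (Stmt.b' * Stmt.a' * Stmt.b' * Stmt.a * Stmt.b * Stmt.a)⁻¹ ∈ Stmt.rels by
    simp [Stmt.rels])
  simp only [map_mul, map_inv, map_pow] at h
  exact mul_inv_eq_one.mp h

/-- r3. -/
theorem h3 : A * B = A' * B' := by
  have h := relG Stmt.rels (show Stmt.a * Stmt.b * (Stmt.a' * Stmt.b')⁻¹ ∈ Stmt.rels by
    simp [Stmt.rels])
  simp only [map_mul, map_inv] at h
  exact mul_inv_eq_one.mp h

/-- r4. -/
theorem h4 : ((B * A * B)⁻¹ * A * (B * A * B)) * Y * ((B * A * B)⁻¹ * A * (B * A * B))⁻¹ * Y⁻¹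
    = 1 := by
  have h := relG Stmt.rels (show ((Stmt.b * Stmt.a * Stmt.b)⁻¹ * Stmt.a *
      (Stmt.b * Stmt.a * Stmt.b)) * Stmt.c' * ((Stmt.b * Stmt.a * Stmt.b)⁻¹ * Stmt.a *
      (Stmt.b * Stmt.a * Stmt.b))⁻¹ * Stmt.c'⁻¹ ∈ Stmt.rels by simp [Stmt.rels])
  simp only [map_mul, map_inv] at h
  exact h

/-- r5. -/
theorem h5 : ((B' * A' * B')⁻¹ * A' * (B' * A' * B')) * X *
    ((B' * A' * B')⁻¹ * A' * (B' * A' * B'))⁻¹ * X⁻¹ = 1 := by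
  have h := relG Stmt.rels (show ((Stmt.b' * Stmt.a' * Stmt.b')⁻¹ * Stmt.a' *
      (Stmt.b' * Stmt.a' * Stmt.b')) * Stmt.c * ((Stmt.b' * Stmt.a' * Stmt.b')⁻¹ * Stmt.a' *
      (Stmt.b' * Stmt.a' * Stmt.b'))⁻¹ * Stmt.c⁻¹ ∈ Stmt.rels by simp [Stmt.rels])
  simp only [map_mul, map_inv] at h
  exact h

/-- r7. -/
theorem h7 : B = Y * X * Y⁻¹ := by
  have h := relG Stmt.rels (show Stmt.b * (Stmt.c' * Stmt.c * Stmt.c'⁻¹)⁻¹ ∈ Stmt.rels by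
    simp [Stmt.rels])
  simp only [map_mul, map_inv] at h
  exact mul_inv_eq_one.mp h

/-- r8. -/
theorem h8 : B' = X * Y * X⁻¹ := by
  have h := relG Stmt.rels (show Stmt.b' * (Stmt.c * Stmt.c' * Stmt.c⁻¹)⁻¹ ∈ Stmt.rels by
    simp [Stmt.rels])
  simp only [map_mul, map_inv] at h
  exact mul_inv_eq_one.mp h

/-- r10. -/
theorem h10 : A * B * Y * A' * B' * X = 1 := by
  have h := relG Stmt.rels (show Stmt.a * Stmt.b * Stmt.c' * Stmt.a' * Stmt.b' * Stmt.c
      ∈ Stmt.rels by simp [Stmt.rels])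
  simp only [map_mul] at h
  exact h

theorem hB'AB' : B' * A' * B' = A * B * A := by
  have e1 : (B' * A' * B') * (A * B * A) = (A * B * A) * (A * B * A) := by
    rw [show (B' * A' * B') * (A * B * A) = B' * A' * B' * A * B * A by group, ← h1,
      show (A * B) ^ 3 = (A * B * A) * (B * A * B) by
        rw [pow_succ, pow_succ, pow_one]; group, ← hbr]
  exact mul_right_cancel e1

theorem hB' : B' = B := by
  have e1 : B' * (A * B) = B * (A * B) := by
    rw [show B' * (A * B) = B' * (A' * B') by rw [h3],
      show B' * (A' * B') = B' * A' * B' by group, hB'AB', hbr]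
    group
  exact mul_right_cancel e1

theorem hA' : A' = A := by
  have e1 : A' * B' = A * B := h3.symm
  rw [hB'] at e1
  exact mul_right_cancel e1

theorem hT : (B * A * B)⁻¹ * A * (B * A * B) = B := braid_conj hbr

theorem hBY : B * Y = Y * B := by
  have h := h4
  rw [hT] at h
  have e : (B * Y) * (Y * B)⁻¹ = 1 := by
    rw [show (B * Y) * (Y * B)⁻¹ = B * Y * B⁻¹ * Y⁻¹ by group]
    exact h
  exact mul_inv_eq_one.mp e

theorem hBX : B * X = X * B := by
  have h := h5
  rw [hA', hB'] at h
  rw [hT] at h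
  have e : (B * X) * (X * B)⁻¹ = 1 := by
    rw [show (B * X) * (X * B)⁻¹ = B * X * B⁻¹ * X⁻¹ by group]
    exact h
  exact mul_inv_eq_one.mp e

theorem hX : X = B := by
  have e : X = Y⁻¹ * (B * Y) := by rw [h7]; group
  rw [hBY] at e
  rw [e]; group

theorem hY : Y = B := by
  have e : Y = X⁻¹ * (B * X) := by
    have := h8; rw [hB'] at this
    rw [this]; group
  rw [hBX] at e
  rw [e]; group

theorem hcube6 : A * B * B * A * B * B = 1 := by
  have h := h10
  rw [hA', hB', hX, hY] at h
  exact h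

theorem hcube : (A * B) ^ 3 = 1 := braid_cube hbr hcube6

/-- the map `Fin 6 → B̄₃`. -/
def f6 : Fin 6 → Bbar3 := fun i =>
  match i with
  | 0 => σ1
  | 1 => σ1
  | 2 => σ2
  | 3 => σ2
  | 4 => σ2
  | 5 => σ2

theorem sigma_cube_swap : σ2 * σ1 * σ2 * σ1 * σ2 * σ1 = 1 := cube_swap sigma_cube

theorem hf : ∀ r ∈ Stmt.rels, FreeGroup.lift f6 r = 1 := by
  intro r hr
  have f0 : f6 0 = σ1 := rfl
  have f1 : f6 1 = σ1 := rfl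
  have f2 : f6 2 = σ2 := rfl
  have f3 : f6 3 = σ2 := rfl
  have f4 : f6 4 = σ2 := rfl
  have f5 : f6 5 = σ2 := rfl
  simp only [Stmt.rels, Set.mem_insert_iff, Set.mem_singleton_iff] at hr
  rcases hr with rfl | rfl | rfl | rfl | rfl | rfl | rfl | rfl | rfl | rfl | rfl <;>
    simp only [Stmt.a, Stmt.a', Stmt.b, Stmt.b', Stmt.c, Stmt.c', map_mul, map_inv, map_pow,
      FreeGroup.lift_apply_of, f0, f1, f2, f3, f4, f5]
  · rw [sigma_cube, sigma_cube_swap]; group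
  · rw [sigma_cube, sigma_cube_swap]; group
  · group
  · rw [braid_conj sigma_braid]; group
  · rw [braid_conj sigma_braid]; group
  · group
  · group
  · group
  · group
  · exact braid_cube' sigma_braid sigma_cube
  · exact mul_inv_eq_one.mpr sigma_braid

/-- the map `Fin 2 → G`. -/
def g2 : Fin 2 → G := fun i =>
  match i with
  | 0 => A
  | 1 => B

theorem hg : ∀ r ∈ bbar3Rels, FreeGroup.lift g2 r = 1 := by
  intro r hr
  have g0 : g2 0 = A := rfl
  have g1 : g2 1 = B := rfl
  simp only [bbar3Rels, Set.mem_insert_iff, Set.mem_singleton_iff] at hr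
  rcases hr with rfl | rfl <;>
    simp only [map_mul, map_inv, map_pow, FreeGroup.lift_apply_of, g0, g1]
  · exact mul_inv_eq_one.mpr hbr
  · exact hcube

def φ : G →* Bbar3 := PresentedGroup.toGroup hf

def ψ : Bbar3 →* G := PresentedGroup.toGroup hg

theorem φ0 : φ (PresentedGroup.of 0) = σ1 := PresentedGroup.toGroup.of hf
theorem φ1 : φ (PresentedGroup.of 1) = σ1 := PresentedGroup.toGroup.of hf
theorem φ2 : φ (PresentedGroup.of 2) = σ2 := PresentedGroup.toGroup.of hf
theorem φ3 : φ (PresentedGroup.of 3) = σ2 := PresentedGroup.toGroup.of hf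
theorem φ4 : φ (PresentedGroup.of 4) = σ2 := PresentedGroup.toGroup.of hf
theorem φ5 : φ (PresentedGroup.of 5) = σ2 := PresentedGroup.toGroup.of hf

theorem ψ1 : ψ σ1 = A := PresentedGroup.toGroup.of hg
theorem ψ2 : ψ σ2 = B := PresentedGroup.toGroup.of hg

theorem left_inv : ψ.comp φ = MonoidHom.id G := by
  apply PresentedGroup.ext
  intro x
  fin_cases x
  · show ψ (φ (PresentedGroup.of 0)) = A
    rw [φ0, ψ1]
  · show ψ (φ (PresentedGroup.of 1)) = A'
    rw [φ1, ψ1, hA']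
  · show ψ (φ (PresentedGroup.of 2)) = B
    rw [φ2, ψ2]
  · show ψ (φ (PresentedGroup.of 3)) = B'
    rw [φ3, ψ2, hB']
  · show ψ (φ (PresentedGroup.of 4)) = X
    rw [φ4, ψ2, hX]
  · show ψ (φ (PresentedGroup.of 5)) = Y
    rw [φ5, ψ2, hY]

theorem right_inv : φ.comp ψ = MonoidHom.id Bbar3 := by
  apply PresentedGroup.ext
  intro x
  fin_cases x
  · show φ (ψ σ1) = σ1
    rw [ψ1]
    exact φ0
  · show φ (ψ σ2) = σ2
    rw [ψ2]
    exact φ2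

end Aux

/-- Adding the braid relation `αβα = βαβ` to the relations R₄, the resulting group maps
isomorphically onto `B̄₃` by `α, α' ↦ σ₁` and `β, β', γ, γ' ↦ σ₂`. -/
theorem stmt6 :
    ∃ φ : PresentedGroup Stmt.rels →* Bbar3,
      (φ (PresentedGroup.of 0) = σ1 ∧ φ (PresentedGroup.of 1) = σ1 ∧
       φ (PresentedGroup.of 2) = σ2 ∧ φ (PresentedGroup.of 3) = σ2 ∧
       φ (PresentedGroup.of 4) = σ2 ∧ φ (PresentedGroup.of 5) = σ2) ∧
      Function.Bijective φ := by
  refine ⟨Aux.φ, ⟨Aux.φ0, Aux.φ1, Aux.φ2, Aux.φ3, Aux.φ4, Aux.φ5⟩, ?_, ?_⟩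
  · intro x y hxy
    have hx := DFunLike.congr_fun Aux.left_inv x
    have hy := DFunLike.congr_fun Aux.left_inv y
    simp only [MonoidHom.comp_apply, MonoidHom.id_apply] at hx hy
    rw [← hx, ← hy, hxy]
  · intro y
    refine ⟨Aux.ψ y, ?_⟩
    have h := DFunLike.congr_fun Aux.right_inv y
    simpa only [MonoidHom.comp_apply, MonoidHom.id_apply] using h
end
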